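/- arXiv:math/0611432 — 2 statements merged into one kernel-verified Lean document; each statement's English description precedes it below -/
import Mathlib

section
/- Let α ∈ (1,2), C > 0, λ > 0, and assume ν̄(x) ~ C x^{−α} as x → ∞. Then for every y ≥ 0, lim_{x→∞} x Ψ^{(t_x)}(x^{−1/α} y) = −λ y − (C Γ(2−α)/(m(α−1))) y^α, where t_x = (1 − λ x^{1/α − 1})/m (defined for x large enough that t_x ∈ [0, 1/m)). -/
open MeasureTheory Filter

/-- The Laplace exponent `Ψ^(t)(ρ) = -ρ + t ∫_0^∞ (1 - e^{-ρ l}) ν(dl)`. -/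
noncomputable def Psi (ν : Measure ℝ) (t ρ : ℝ) : ℝ :=
  -ρ + t * ∫ l, (1 - Real.exp (-(ρ * l))) ∂ν

/-!
Write `Ψ^(t)(ρ) = -ρ + t (m ρ - R(ρ))` with `R(ρ) = ∫ (e^{-ρl} - 1 + ρl) ν(dl)`. With
`ρ = x^{-1/α} y` the choice of `t_x` makes the linear terms of `x Ψ^(t_x)(ρ)` collapse to `-λ y`,
and `x = y^α ρ^{-α}`, so everything reduces to `ρ^{-α} R(ρ) → C Γ(2-α)/(α-1)` as `ρ → 0+`.
By the layer-cake formula `R(ρ) = ∫_0^∞ (1 - e^{-s}) ν̄(s/ρ) ds`, hence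
`ρ^{-α} R(ρ) = ∫_0^∞ (1 - e^{-s}) s^{-α} · (s/ρ)^α ν̄(s/ρ) ds`. The last factor tends to `C` and
is bounded (by the tail asymptotics for large `s/ρ`, by Markov's inequality `z ν̄(z) ≤ m` for
small `s/ρ`), so dominated convergence applies; `∫_0^∞ (1 - e^{-s}) s^{-α} ds = Γ(2-α)/(α-1)` is
again the layer-cake formula, now for the measure `s^{-α} ds` on `(0,∞)`.
-/

open Set Real Topology
open scoped ENNReal

theorem one_sub_exp_neg_nonneg {x : ℝ} (hx : 0 ≤ x) : 0 ≤ 1 - exp (-x) :=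
  sub_nonneg.2 (exp_le_one_iff.2 (neg_nonpos.2 hx))

theorem one_sub_exp_neg_mul_rpow_nonneg (α : ℝ) :
    0 ≤ᵐ[volume.restrict (Ioi 0)] fun s : ℝ => (1 - exp (-s)) * s ^ (-α) :=
  (ae_restrict_iff' measurableSet_Ioi).2 (ae_of_all _ fun _ hs =>
    mul_nonneg (one_sub_exp_neg_nonneg (le_of_lt hs)) (rpow_nonneg (le_of_lt hs) _))

theorem integral_one_sub_exp_neg (b : ℝ) : ∫ s in (0:ℝ)..b, (1 - exp (-s)) = exp (-b) - 1 + b := by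
  rw [intervalIntegral.integral_sub intervalIntegrable_const
    ((by fun_prop : Continuous fun s => exp (-s)).intervalIntegrable _ _)]
  simp
  ring

theorem lintegral_Ioi_rpow_neg {α u : ℝ} (hα : 1 < α) (hu : 0 < u) :
    ∫⁻ s in Ioi u, ENNReal.ofReal (s ^ (-α)) = ENNReal.ofReal (u ^ (1 - α) / (α - 1)) := by
  rw [← ofReal_integral_eq_lintegral_ofReal (integrableOn_Ioi_rpow_of_lt (by linarith) hu)
    ((ae_restrict_iff' measurableSet_Ioi).2 (ae_of_all _ fun s hs =>
      rpow_nonneg (hu.trans hs).le _)), integral_Ioi_rpow_of_lt (by linarith) hu,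
    show -α + 1 = 1 - α by ring, neg_div, ← div_neg, neg_sub]

theorem lintegral_one_sub_exp_neg_mul_rpow {α : ℝ} (hα1 : 1 < α) (hα2 : α < 2) :
    ∫⁻ s in Ioi 0, ENNReal.ofReal ((1 - exp (-s)) * s ^ (-α)) =
      ENNReal.ofReal (Gamma (2 - α) / (α - 1)) := by
  set μ := (volume.restrict (Ioi (0:ℝ))).withDensity fun s => ENNReal.ofReal (s ^ (-α))
  have hμ : μ ≪ volume.restrict (Ioi 0) := withDensity_absolutelyContinuous _ _
  have layer := lintegral_comp_eq_lintegral_meas_lt_mul μ (f := id) (g := fun u => exp (-u))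
    (hμ.ae_le ((ae_restrict_iff' measurableSet_Ioi).2 (ae_of_all _ fun s hs => le_of_lt hs)))
    aemeasurable_id (fun t _ => (by fun_prop : Continuous fun s => exp (-s)).intervalIntegrable 0 t)
    (ae_of_all _ fun u => (exp_pos _).le)
  have hμ_Ioi : ∀ u > 0, μ {s | u < id s} = ENNReal.ofReal (u ^ (1 - α) / (α - 1)) := by
    intro u hu
    rw [show {s | u < id s} = Ioi u from rfl, withDensity_apply _ measurableSet_Ioi,
      Measure.restrict_restrict measurableSet_Ioi, Ioi_inter_Ioi, max_eq_left hu.le,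
      lintegral_Ioi_rpow_neg hα1 hu]
  have hΓ : 0 < 2 - α := by linarith
  have hGamma := (GammaIntegral_convergent hΓ).mul_const (α - 1)⁻¹
  have hGamma_nonneg : 0 ≤ᵐ[volume.restrict (Ioi 0)]
      fun u => exp (-u) * u ^ ((2 - α) - 1) * (α - 1)⁻¹ :=
    (ae_restrict_iff' measurableSet_Ioi).2 (ae_of_all _ fun u (hu : 0 < u) => by
      have := inv_pos.2 (sub_pos.2 hα1); positivity)
  calc ∫⁻ s in Ioi 0, ENNReal.ofReal ((1 - exp (-s)) * s ^ (-α))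
      = ∫⁻ s, ENNReal.ofReal (∫ u in (0:ℝ)..id s, exp (-u)) ∂μ := by
        rw [lintegral_withDensity_eq_lintegral_mul _ (by fun_prop) (by fun_prop)]
        refine setLIntegral_congr_fun measurableSet_Ioi fun s hs => ?_
        simp [ENNReal.ofReal_mul (rpow_nonneg (le_of_lt hs) _), mul_comm]
    _ = ∫⁻ u in Ioi 0, ENNReal.ofReal (exp (-u) * u ^ ((2 - α) - 1) * (α - 1)⁻¹) := by
        rw [layer]
        refine setLIntegral_congr_fun measurableSet_Ioi fun u hu => ?_
        rw [hμ_Ioi u hu,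
          ← ENNReal.ofReal_mul (div_nonneg (rpow_nonneg (le_of_lt hu) _) (by linarith))]
        ring_nf
    _ = ENNReal.ofReal (Gamma (2 - α) / (α - 1)) := by
        rw [← ofReal_integral_eq_lintegral_ofReal hGamma hGamma_nonneg, integral_mul_const,
          ← Gamma_eq_integral hΓ, div_eq_mul_inv]

theorem integrableOn_one_sub_exp_neg_mul_rpow {α : ℝ} (hα1 : 1 < α) (hα2 : α < 2) :
    IntegrableOn (fun s => (1 - exp (-s)) * s ^ (-α)) (Ioi 0) :=
  ⟨by fun_prop, (hasFiniteIntegral_iff_ofReal (one_sub_exp_neg_mul_rpow_nonneg α)).2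
    (by rw [lintegral_one_sub_exp_neg_mul_rpow hα1 hα2]; exact ENNReal.ofReal_lt_top)⟩

theorem integral_one_sub_exp_neg_mul_rpow {α : ℝ} (hα1 : 1 < α) (hα2 : α < 2) :
    ∫ s in Ioi 0, (1 - exp (-s)) * s ^ (-α) = Gamma (2 - α) / (α - 1) := by
  rw [integral_eq_lintegral_of_nonneg_ae (one_sub_exp_neg_mul_rpow_nonneg α) (by fun_prop),
    lintegral_one_sub_exp_neg_mul_rpow hα1 hα2,
    ENNReal.toReal_ofReal (div_nonneg (Gamma_pos_of_pos (by linarith)).le (by linarith))]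

theorem tendsto_setIntegral_mul_comp_div {k h : ℝ → ℝ} {B c : ℝ} (hk : IntegrableOn k (Ioi 0))
    (hh : Measurable h) (hB : ∀ z > 0, ‖h z‖ ≤ B) (hlim : Tendsto h atTop (𝓝 c)) :
    Tendsto (fun ρ => ∫ s in Ioi 0, k s * h (s / ρ)) (𝓝[>] 0)
      (𝓝 ((∫ s in Ioi 0, k s) * c)) := by
  rw [← integral_mul_const]
  refine tendsto_integral_filter_of_dominated_convergence (fun s => ‖k s‖ * B)
    (Eventually.of_forall fun ρ =>
      hk.aestronglyMeasurable.mul (hh.comp (measurable_id.div_const ρ)).aestronglyMeasurable)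
    ?_ (hk.norm.mul_const B) ?_
  · filter_upwards [self_mem_nhdsWithin] with ρ (hρ : 0 < ρ)
    refine (ae_restrict_iff' measurableSet_Ioi).2 (ae_of_all _ fun s (hs : 0 < s) => ?_)
    rw [norm_mul]
    exact mul_le_mul_of_nonneg_left (hB _ (div_pos hs hρ)) (norm_nonneg _)
  · refine (ae_restrict_iff' measurableSet_Ioi).2 (ae_of_all _ fun s (hs : 0 < s) => ?_)
    have hdiv : Tendsto (fun ρ : ℝ => s / ρ) (𝓝[>] 0) atTop := by
      simpa only [div_eq_mul_inv] using tendsto_inv_nhdsGT_zero.const_mul_atTop hs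
    exact (hlim.comp hdiv).const_mul (k s)

theorem tendsto_mul_comp_rpow_neg_inv_mul {f : ℝ → ℝ} {α K y : ℝ} (hα : 0 < α) (hy : 0 ≤ y)
    (hf0 : f 0 = 0) (hf : Tendsto (fun ρ => ρ ^ (-α) * f ρ) (𝓝[>] 0) (𝓝 K)) :
    Tendsto (fun x : ℝ => x * f (x ^ (-(1 / α)) * y)) atTop (𝓝 (K * y ^ α)) := by
  rcases hy.eq_or_lt with rfl | hy
  · simp [hf0, zero_rpow hα.ne']
  have hρ : Tendsto (fun x : ℝ => x ^ (-(1 / α)) * y) atTop (𝓝[>] 0) := by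
    refine tendsto_nhdsWithin_iff.2 ⟨?_, ?_⟩
    · simpa using (tendsto_rpow_neg_atTop (one_div_pos.2 hα)).mul_const y
    · filter_upwards [eventually_gt_atTop 0] with x hx
      exact mul_pos (rpow_pos_of_pos hx _) hy
  refine ((hf.comp hρ).mul_const (y ^ α)).congr' ?_
  filter_upwards [eventually_gt_atTop 0] with x hx
  dsimp only [Function.comp_apply]
  set ρ := x ^ (-(1 / α)) * y
  have hx' : ρ ^ (-α) * y ^ α = x := by
    rw [mul_rpow (rpow_nonneg hx.le _) hy.le, ← rpow_mul hx.le, mul_assoc, ← rpow_add hy,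
      show -(1 / α) * -α = 1 by field_simp, neg_add_cancel, rpow_zero, rpow_one, mul_one]
  rw [← hx']
  ring

noncomputable def laplaceRemainder (ν : Measure ℝ) (ρ : ℝ) : ℝ :=
  ∫ l, (exp (-(ρ * l)) - 1 + ρ * l) ∂ν

theorem laplaceRemainder_zero (ν : Measure ℝ) : laplaceRemainder ν 0 = 0 := by
  simp [laplaceRemainder]

theorem measurable_measure_Ioi (ν : Measure ℝ) : Measurable fun x => ν (Ioi x) :=
  Antitone.measurable fun _ _ hab => measure_mono (Ioi_subset_Ioi hab)

section PositiveMeasure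

variable {ν : Measure ℝ} (hν0 : ν (Iic 0) = 0) (hint : Integrable (fun l : ℝ => l) ν)
include hν0

theorem ae_pos_of_measure_Iic_eq_zero : ∀ᵐ l ∂ν, 0 < l := by
  rw [ae_iff]
  simp only [not_lt]
  exact hν0

include hint

theorem integrable_one_sub_exp_neg_mul {ρ : ℝ} (hρ : 0 ≤ ρ) :
    Integrable (fun l => 1 - exp (-(ρ * l))) ν := by
  refine (hint.const_mul ρ).mono (by fun_prop) ?_
  filter_upwards [ae_pos_of_measure_Iic_eq_zero hν0] with l hl
  have hρl : 0 ≤ ρ * l := mul_nonneg hρ hl.le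
  rw [norm_of_nonneg (one_sub_exp_neg_nonneg hρl), norm_of_nonneg hρl]
  linarith [add_one_le_exp (-(ρ * l))]

theorem Psi_eq_sub_laplaceRemainder (t : ℝ) {ρ : ℝ} (hρ : 0 ≤ ρ) :
    Psi ν t ρ = -ρ + t * (ρ * ∫ l, l ∂ν - laplaceRemainder ν ρ) := by
  have hR : laplaceRemainder ν ρ = ∫ l, (ρ * l - (1 - exp (-(ρ * l)))) ∂ν := by
    simp only [laplaceRemainder]
    congr 1 with l
    ring
  rw [Psi, hR, integral_sub (hint.const_mul ρ) (integrable_one_sub_exp_neg_mul hν0 hint hρ),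
    integral_const_mul, sub_sub_cancel]

omit hν0 in
theorem measure_Ioi_lt_top {c : ℝ} (hc : 0 < c) : ν (Ioi c) < ∞ :=
  (measure_mono Ioi_subset_Ici_self).trans_lt (hint.measure_ge_lt_top hc)

theorem mul_measure_Ioi_le_integral {c : ℝ} (hc : 0 < c) :
    c * (ν (Ioi c)).toReal ≤ ∫ l, l ∂ν := by
  refine le_trans ?_ (mul_meas_ge_le_integral_of_nonneg
    ((ae_pos_of_measure_Iic_eq_zero hν0).mono fun _ hl => hl.le) hint c)
  exact mul_le_mul_of_nonneg_left (ENNReal.toReal_mono (hint.measure_ge_lt_top hc).ne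
    (measure_mono Ioi_subset_Ici_self)) hc.le

theorem laplaceRemainder_eq_integral_tail {ρ : ℝ} (hρ : 0 < ρ) :
    laplaceRemainder ν ρ = ∫ s in Ioi 0, (1 - exp (-s)) * (ν (Ioi (s / ρ))).toReal := by
  have layer := lintegral_comp_eq_lintegral_meas_lt_mul ν (f := fun l => ρ * l)
    (g := fun s => 1 - exp (-s))
    ((ae_pos_of_measure_Iic_eq_zero hν0).mono fun l hl => (mul_pos hρ hl).le) (by fun_prop)
    (fun t _ => (by fun_prop : Continuous fun s => 1 - exp (-s)).intervalIntegrable 0 t)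
    ((ae_restrict_iff' measurableSet_Ioi).2 (ae_of_all _ fun _ hs =>
      one_sub_exp_neg_nonneg (le_of_lt hs)))
  simp only [integral_one_sub_exp_neg] at layer
  have hsets : ∀ s, {l | s < ρ * l} = Ioi (s / ρ) := fun s => by
    ext l; simp [div_lt_iff₀ hρ, mul_comm]
  rw [laplaceRemainder, integral_eq_lintegral_of_nonneg_ae
      (ae_of_all _ fun l => by
        simp only [Pi.zero_apply]; linarith [add_one_le_exp (-(ρ * l))]) (by fun_prop),
    integral_eq_lintegral_of_nonneg_ae ((ae_restrict_iff' measurableSet_Ioi).2 (ae_of_all _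
      fun s hs => mul_nonneg (one_sub_exp_neg_nonneg (le_of_lt hs)) ENNReal.toReal_nonneg)) ?_,
    layer]
  · congr 1
    refine setLIntegral_congr_fun measurableSet_Ioi fun s hs => ?_
    rw [hsets, ENNReal.ofReal_mul (one_sub_exp_neg_nonneg (le_of_lt hs)), mul_comm,
      ENNReal.ofReal_toReal (measure_Ioi_lt_top hint (div_pos hs hρ)).ne]
  · refine Measurable.aestronglyMeasurable ?_
    exact (by fun_prop : Measurable fun s => 1 - exp (-s)).mul
      ((measurable_measure_Ioi ν).comp (measurable_id.div_const ρ)).ennreal_toReal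

theorem exists_rpow_mul_measure_Ioi_le {α C : ℝ} (hα : 1 ≤ α)
    (htail : Tendsto (fun x => x ^ α * (ν (Ioi x)).toReal) atTop (𝓝 C)) :
    ∃ B, ∀ z > 0, z ^ α * (ν (Ioi z)).toReal ≤ B := by
  obtain ⟨z₀, hz₀⟩ := eventually_atTop.1 (htail.eventually_le_const (lt_add_one C))
  set z₁ := max z₀ 1
  refine ⟨max (C + 1) (z₁ ^ (α - 1) * ∫ l, l ∂ν), fun z hz => ?_⟩
  rcases le_or_gt z₁ z with h | h
  · exact (hz₀ z ((le_max_left _ _).trans h)).trans (le_max_left _ _)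
  refine le_trans ?_ (le_max_right _ _)
  calc z ^ α * (ν (Ioi z)).toReal = z ^ (α - 1) * (z * (ν (Ioi z)).toReal) := by
        rw [rpow_sub hz, rpow_one]
        field_simp
    _ ≤ z₁ ^ (α - 1) * ∫ l, l ∂ν :=
        mul_le_mul (rpow_le_rpow hz.le h.le (by linarith))
          (mul_measure_Ioi_le_integral hν0 hint hz) (mul_nonneg hz.le ENNReal.toReal_nonneg)
          (rpow_nonneg (zero_le_one.trans (le_max_right _ _)) _)

theorem tendsto_rpow_neg_mul_laplaceRemainder {α C : ℝ} (hα1 : 1 < α) (hα2 : α < 2)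
    (htail : Tendsto (fun x => x ^ α * (ν (Ioi x)).toReal) atTop (𝓝 C)) :
    Tendsto (fun ρ => ρ ^ (-α) * laplaceRemainder ν ρ) (𝓝[>] 0)
      (𝓝 (C * (Gamma (2 - α) / (α - 1)))) := by
  obtain ⟨B, hB⟩ := exists_rpow_mul_measure_Ioi_le hν0 hint hα1.le htail
  have hlim := tendsto_setIntegral_mul_comp_div (h := fun z => z ^ α * (ν (Ioi z)).toReal) (B := B)
    (integrableOn_one_sub_exp_neg_mul_rpow hα1 hα2)
    ((measurable_id.pow_const α).mul (measurable_measure_Ioi ν).ennreal_toReal) ?_ htail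
  · rw [integral_one_sub_exp_neg_mul_rpow hα1 hα2, mul_comm _ C] at hlim
    refine hlim.congr' ?_
    filter_upwards [self_mem_nhdsWithin] with ρ (hρ : 0 < ρ)
    rw [laplaceRemainder_eq_integral_tail hν0 hint hρ, ← integral_const_mul]
    refine setIntegral_congr_fun measurableSet_Ioi fun s (hs : 0 < s) => ?_
    rw [div_rpow hs.le hρ.le, rpow_neg hρ.le, rpow_neg hs.le]
    field_simp
  · intro z hz
    rw [norm_of_nonneg (mul_nonneg (rpow_nonneg hz.le _) ENNReal.toReal_nonneg)]
    exact hB z hz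

theorem mul_Psi_window_eq {m α lam x y : ℝ} (hm : m = ∫ l, l ∂ν) (hm0 : m ≠ 0) (hx : 0 < x)
    (hy : 0 ≤ y) :
    x * Psi ν ((1 - lam * x ^ (1 / α - 1)) / m) (x ^ (-(1 / α)) * y) =
      -(lam * y) - (1 - lam * x ^ (1 / α - 1)) / m *
        (x * laplaceRemainder ν (x ^ (-(1 / α)) * y)) := by
  have hexp : x * x ^ (-(1 / α)) * x ^ (1 / α - 1) = 1 := by
    rw [mul_assoc, ← rpow_add hx, show -(1 / α) + (1 / α - 1) = -1 by ring, rpow_neg_one,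
      mul_inv_cancel₀ hx.ne']
  rw [Psi_eq_sub_laplaceRemainder hν0 hint _ (mul_nonneg (rpow_nonneg hx.le _) hy), ← hm]
  field_simp
  linear_combination (-(lam * y) * m) * hexp

end PositiveMeasure

theorem Psi_window_limit_stable_general
    (ν : Measure ℝ) (hν0 : ν (Set.Iic 0) = 0)
    (hint : Integrable (fun l : ℝ => l) ν)
    (m : ℝ) (hm : m = ∫ l, l ∂ν) (hmpos : 0 < m)
    (α C : ℝ) (hα1 : 1 < α) (hα2 : α < 2)
    (htail : Tendsto (fun x : ℝ => x ^ α * (ν (Set.Ioi x)).toReal)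
      atTop (nhds C))
    (lam : ℝ)
    (y : ℝ) (hy : 0 ≤ y) :
    Tendsto
      (fun x : ℝ =>
        x * Psi ν ((1 - lam * x ^ (1 / α - 1)) / m) (x ^ (-(1 / α)) * y))
      atTop
      (nhds (-(lam * y) - (C * Real.Gamma (2 - α) / (m * (α - 1))) * y ^ α)) := by
  have hα : 0 < α := by linarith
  have hR := tendsto_mul_comp_rpow_neg_inv_mul hα hy (laplaceRemainder_zero ν)
    (tendsto_rpow_neg_mul_laplaceRemainder hν0 hint hα1 hα2 htail)
  have hw : Tendsto (fun x : ℝ => x ^ (1 / α - 1)) atTop (𝓝 0) := by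
    rw [show 1 / α - 1 = -(1 - 1 / α) by ring]
    exact tendsto_rpow_neg_atTop (sub_pos.2 ((div_lt_one hα).2 hα1))
  have ht : Tendsto (fun x : ℝ => (1 - lam * x ^ (1 / α - 1)) / m) atTop (𝓝 (1 / m)) := by
    simpa using ((hw.const_mul lam).const_sub 1).div_const m
  have hlim := (ht.mul hR).const_sub (-(lam * y))
  rw [show -(lam * y) - 1 / m * (C * (Gamma (2 - α) / (α - 1)) * y ^ α) =
    -(lam * y) - C * Gamma (2 - α) / (m * (α - 1)) * y ^ α by
      rw [div_eq_mul_inv (C * _), mul_inv]; ring] at hlim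
  refine hlim.congr' ?_
  filter_upwards [eventually_gt_atTop 0] with x hx
  exact (mul_Psi_window_eq hν0 hint hm hmpos.ne' hx hy).symm

/-- Let `ν` be a measure on `(0,∞)` with finite positive mean `m` whose tail satisfies
`ν̄(x) ~ C x^{-α}` as `x → ∞`, with `α ∈ (1,2)`, `C > 0`, and let `λ > 0`. Then for
every `y ≥ 0`, `lim_{x→∞} x Ψ^(t_x)(x^{-1/α} y) = -λ y - (C Γ(2-α)/(m(α-1))) y^α`,
where `t_x = (1 - λ x^{1/α - 1})/m`. -/
theorem Psi_window_limit_stable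
    (ν : Measure ℝ) (hν0 : ν (Set.Iic 0) = 0)
    (hint : Integrable (fun l : ℝ => l) ν)
    (m : ℝ) (hm : m = ∫ l, l ∂ν) (hmpos : 0 < m)
    (α C : ℝ) (hα1 : 1 < α) (hα2 : α < 2) (hC : 0 < C)
    (htail : Tendsto (fun x : ℝ => x ^ α * (ν (Set.Ioi x)).toReal)
      atTop (nhds C))
    (lam : ℝ) (hlam : 0 < lam)
    (y : ℝ) (hy : 0 ≤ y) :
    Tendsto
      (fun x : ℝ =>
        x * Psi ν ((1 - lam * x ^ (1 / α - 1)) / m) (x ^ (-(1 / α)) * y))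
      atTop
      (nhds (-(lam * y) - (C * Real.Gamma (2 - α) / (m * (α - 1))) * y ^ α)) :=
  Psi_window_limit_stable_general ν hν0 hint m hm hmpos α C hα1 hα2 htail lam y hy
end

section
/- Let L be a random variable whose law is (1/(1+m̂))(δ₀(dx) + 1_{x>0} x Π(dx)), where m̂ = ∫_0^∞ x Π(dx), and let U be uniformly distributed on [0,1] and independent of L. Then for all λ, μ ≥ 0 with λ ≠ μ, E[exp(−λ U L − μ (1−U) L)] = (1/(1+m̂)) · (κ(λ) − κ(μ))/(λ − μ). -/
open MeasureTheory Filter ProbabilityTheory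

/-!
Integrating out `U` first, the integrand averages to
`H(l) = ∫₀¹ exp (-(λ u + μ (1 - u)) l) du`, and `(λ - μ) l H(l) = e^{-μ l} - e^{-λ l}`.
The size-biasing density `x` in the law of `L` cancels the singular factor `1/l`: the atom at `0`
contributes `H(0) = 1`, and the absolutely continuous part contributes
`∫ (e^{-μ x} - e^{-λ x}) Π(dx) / (λ - μ) = ((κ(λ) - λ) - (κ(μ) - μ)) / (λ - μ)`.
-/

lemma sub_mul_setIntegral_Icc_exp_convexComb (a b : ℝ) :
    (b - a) * ∫ u in Set.Icc (0 : ℝ) 1, Real.exp ((1 - u) * a + u * b) =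
      Real.exp b - Real.exp a := by
  rcases eq_or_ne a b with rfl | hab
  · simp
  have hba : b - a ≠ 0 := sub_ne_zero.2 hab.symm
  have hlin : ∀ u : ℝ, (1 - u) * a + u * b = a + (b - a) * u := fun u => by ring
  simp_rw [hlin]
  rw [integral_Icc_eq_integral_Ioc, ← intervalIntegral.integral_of_le zero_le_one,
    intervalIntegral.integral_comp_add_mul _ hba, integral_exp, smul_eq_mul, mul_zero, add_zero,
    mul_one, add_sub_cancel, mul_inv_cancel_left₀ hba]

lemma mul_setIntegral_Icc_exp_neg_mix {lam mu : ℝ} (hne : lam ≠ mu) (x : ℝ) :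
    x * ∫ u in Set.Icc (0 : ℝ) 1, Real.exp (-(lam * (u * x)) - mu * ((1 - u) * x)) =
      (lam - mu)⁻¹ * ((1 - Real.exp (-(lam * x))) - (1 - Real.exp (-(mu * x)))) := by
  have key := sub_mul_setIntegral_Icc_exp_convexComb (-(mu * x)) (-(lam * x))
  have hmix : ∀ u : ℝ,
      -(lam * (u * x)) - mu * ((1 - u) * x) = (1 - u) * -(mu * x) + u * -(lam * x) :=
    fun u => by ring
  simp_rw [hmix]
  rw [eq_inv_mul_iff_mul_eq₀ (sub_ne_zero.2 hne)]
  linear_combination -key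

lemma integrable_exp_neg_mix_prod {μ ν : Measure ℝ} [IsFiniteMeasure μ] [IsFiniteMeasure ν]
    (hμ : ∀ᵐ u ∂μ, u ∈ Set.Icc (0 : ℝ) 1) (hν : ∀ᵐ l ∂ν, 0 ≤ l) {lam mu : ℝ} (hlam : 0 ≤ lam)
    (hmu : 0 ≤ mu) :
    Integrable (Function.uncurry fun u l => Real.exp (-(lam * (u * l)) - mu * ((1 - u) * l)))
      (μ.prod ν) := by
  refine Integrable.of_bound (by fun_prop) 1 ?_
  filter_upwards [Measure.quasiMeasurePreserving_fst.ae hμ,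
    Measure.quasiMeasurePreserving_snd.ae hν] with p hu hl
  have := mul_nonneg hlam (mul_nonneg hu.1 hl)
  have := mul_nonneg hmu (mul_nonneg (sub_nonneg.2 hu.2) hl)
  rw [Function.uncurry_apply_pair, Real.norm_of_nonneg (Real.exp_pos _).le, Real.exp_le_one_iff]
  linarith

theorem ProbabilityTheory.IndepFun.integral_comp_eq_integral_integral
    {Ω α β E : Type*} [MeasurableSpace Ω] [MeasurableSpace α] [MeasurableSpace β]
    [NormedAddCommGroup E] [NormedSpace ℝ E] {μ : Measure Ω} [IsFiniteMeasure μ]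
    {X : Ω → α} {Y : Ω → β} (hXY : IndepFun X Y μ) (hX : AEMeasurable X μ)
    (hY : AEMeasurable Y μ) {g : α → β → E}
    (hg : Integrable (Function.uncurry g) ((μ.map X).prod (μ.map Y))) :
    ∫ ω, g (X ω) (Y ω) ∂μ = ∫ y, ∫ x, g x y ∂(μ.map X) ∂(μ.map Y) := by
  have hmap := (indepFun_iff_map_prod_eq_prod_map_map hX hY).1 hXY
  have hgm : AEStronglyMeasurable (Function.uncurry g) (μ.map fun ω => (X ω, Y ω)) :=
    hmap ▸ hg.aestronglyMeasurable
  calc ∫ ω, g (X ω) (Y ω) ∂μ = ∫ p, Function.uncurry g p ∂(μ.map fun ω => (X ω, Y ω)) :=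
        (integral_map (hX.prodMk hY) hgm).symm
    _ = _ := by rw [hmap]; exact integral_prod_symm _ hg

lemma ae_nonneg_dirac_add_withDensity_ofReal {P : Measure ℝ} (hP : ∀ᵐ x ∂P, 0 ≤ x) :
    ∀ᵐ x ∂(Measure.dirac 0 + P.withDensity (fun x => ENNReal.ofReal x)), 0 ≤ x :=
  ae_add_measure_iff.2
    ⟨(ae_dirac_iff measurableSet_Ici).2 le_rfl, (withDensity_absolutelyContinuous P _).ae_le hP⟩

lemma integral_smul_dirac_add_withDensity_ofReal {P : Measure ℝ} (hP : ∀ᵐ x ∂P, 0 ≤ x)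
    {m : ℝ} (hm : 0 < 1 + m) {H : ℝ → ℝ}
    (hH : Integrable H ((ENNReal.ofReal (1 + m))⁻¹ •
      (Measure.dirac 0 + P.withDensity (fun x => ENNReal.ofReal x)))) :
    ∫ x, H x ∂((ENNReal.ofReal (1 + m))⁻¹ •
      (Measure.dirac 0 + P.withDensity (fun x => ENNReal.ofReal x))) =
      (1 + m)⁻¹ * (H 0 + ∫ x, x * H x ∂P) := by
  obtain ⟨hH₀, hH₁⟩ := integrable_add_measure.1 <| (integrable_smul_measure
    (ENNReal.inv_ne_zero.2 ENNReal.ofReal_ne_top)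
    (ENNReal.inv_ne_top.2 (ENNReal.ofReal_pos.2 hm).ne')).1 hH
  rw [integral_smul_measure, integral_add_measure hH₀ hH₁, integral_dirac,
    integral_withDensity_eq_integral_toReal_smul ENNReal.measurable_ofReal
      (ae_of_all _ fun _ => ENNReal.ofReal_lt_top),
    ENNReal.toReal_inv, ENNReal.toReal_ofReal hm.le, smul_eq_mul]
  congr 2
  refine integral_congr_ae (hP.mono fun x hx => ?_)
  simp [ENNReal.toReal_ofReal hx]

lemma integrable_one_sub_exp_neg_mul_s18 {P : Measure ℝ} (hP : ∀ᵐ x ∂P, 0 ≤ x)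
    (hint : Integrable (fun x : ℝ => x) P) {ρ : ℝ} (hρ : 0 ≤ ρ) :
    Integrable (fun x => 1 - Real.exp (-(ρ * x))) P := by
  refine (hint.const_mul ρ).mono' (by fun_prop) (hP.mono fun x hx => ?_)
  have hρx : 0 ≤ ρ * x := mul_nonneg hρ hx
  have hexp : Real.exp (-(ρ * x)) ≤ 1 := Real.exp_le_one_iff.2 (neg_nonpos.2 hρx)
  rw [Real.norm_of_nonneg (sub_nonneg.2 hexp)]
  linarith [Real.add_one_le_exp (-(ρ * x))]

/-- Let `Π` be a measure on `(0,∞)` with `m̂ = ∫ x Π(dx) < ∞` and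
`κ(ρ) = ρ + ∫_0^∞ (1 - e^{-ρ x}) Π(dx)`. Let `L` be a random variable with law
`(1/(1+m̂))(δ₀(dx) + 1_{x>0} x Π(dx))` and let `U` be uniform on `[0,1]`,
independent of `L`. Then for all `λ, μ ≥ 0` with `λ ≠ μ`,
`E[exp(-λ U L - μ (1-U) L)] = (1/(1+m̂)) (κ(λ) - κ(μ))/(λ - μ)`. -/
theorem laplace_transform_size_biased_split
    {Ω : Type*} [MeasurableSpace Ω] (Pr : Measure Ω) [IsProbabilityMeasure Pr]
    (P : Measure ℝ) (hP0 : P (Set.Iic 0) = 0)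
    (hint : Integrable (fun x : ℝ => x) P)
    (mhat : ℝ) (hmhat : mhat = ∫ x, x ∂P)
    (κ : ℝ → ℝ)
    (hκ : ∀ ρ : ℝ, κ ρ = ρ + ∫ x, (1 - Real.exp (-(ρ * x))) ∂P)
    (L U : Ω → ℝ) (hL : Measurable L) (hU : Measurable U)
    (hLlaw : Measure.map L Pr =
      (ENNReal.ofReal (1 + mhat))⁻¹ •
        (Measure.dirac 0 + P.withDensity (fun x => ENNReal.ofReal x)))
    (hUlaw : Measure.map U Pr = volume.restrict (Set.Icc 0 1))
    (hindep : IndepFun U L Pr)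
    (lam mu : ℝ) (hlam : 0 ≤ lam) (hmu : 0 ≤ mu) (hne : lam ≠ mu) :
    ∫ ω, Real.exp (-(lam * (U ω * L ω)) - mu * ((1 - U ω) * L ω)) ∂Pr =
      (1 + mhat)⁻¹ * ((κ lam - κ mu) / (lam - mu)) := by
  have hPpos : ∀ᵐ x ∂P, 0 ≤ x :=
    measure_mono_null (fun x (hx : ¬ 0 ≤ x) => Set.mem_Iic.2 (not_le.1 hx).le) hP0
  have hmhat_pos : 0 < 1 + mhat := by linarith [hmhat ▸ integral_nonneg_of_ae hPpos]
  have := Measure.isProbabilityMeasure_map (μ := Pr) hU.aemeasurable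
  have := Measure.isProbabilityMeasure_map (μ := Pr) hL.aemeasurable
  have hL0 : ∀ᵐ l ∂(Pr.map L), 0 ≤ l :=
    hLlaw ▸ Measure.ae_smul_measure (ae_nonneg_dirac_add_withDensity_ofReal hPpos) _
  have hg := integrable_exp_neg_mix_prod (hUlaw ▸ ae_restrict_mem measurableSet_Icc) hL0 hlam hmu
  set H : ℝ → ℝ := fun l =>
    ∫ u in Set.Icc (0 : ℝ) 1, Real.exp (-(lam * (u * l)) - mu * ((1 - u) * l))
  have hH : Integrable H (Pr.map L) := by
    have := hg.integral_prod_right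
    rwa [hUlaw] at this
  have hH0 : H 0 = 1 := by simp [H]
  have hxH : ∀ x, x * H x = _ := mul_setIntegral_Icc_exp_neg_mix hne
  calc _ = ∫ l, ∫ u, Real.exp (-(lam * (u * l)) - mu * ((1 - u) * l)) ∂(Pr.map U) ∂(Pr.map L) :=
        hindep.integral_comp_eq_integral_integral hU.aemeasurable hL.aemeasurable hg
    _ = ∫ l, H l ∂(Pr.map L) := by rw [hUlaw]
    _ = (1 + mhat)⁻¹ * (H 0 + ∫ x, x * H x ∂P) := by
        rw [hLlaw] at hH ⊢
        exact integral_smul_dirac_add_withDensity_ofReal hPpos hmhat_pos hH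
    _ = _ := by
        simp_rw [hH0, hxH]
        rw [integral_const_mul, integral_sub (integrable_one_sub_exp_neg_mul_s18 hPpos hint hlam)
          (integrable_one_sub_exp_neg_mul_s18 hPpos hint hmu), hκ, hκ]
        field_simp
        ring
end
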